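/- Let I_pp and I_sp be independent nonnegative random variables with Laplace transforms L_{I_pp}(s) = exp(-λ_p c₁ s^{2/α}) and L_{I_sp}(s) = exp(-λ_s c₁ s^{2/α}), and let |h|² ~ Exp(1) independent of both. Then P(P_p d_p^{-α}|h|² / (P_p I_pp + P_s I_sp) ≤ β_p) = 1 - exp(-λ_p c₁ β_p^{2/α} d_p²) exp(-λ_s c₁ d_p² (P_s β_p/P_p)^{2/α}). -/

import Mathlib

/-!
Given the interference, the outage event is `{|h|² ≤ T}` with
`T = β_p d_p^α I_pp + β_p d_p^α (P_s / P_p) I_sp`, so the exponential CDF turns its probability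
into `1 - E[exp (-T)]`, which factorizes by independence into the two Laplace transforms. The
rewriting of the event fails only on `{I_pp = 0}`, a null set because the Laplace transform of
`I_pp` vanishes at infinity.
-/

open MeasureTheory ProbabilityTheory Real Filter Topology Set

namespace ProbabilityTheory

variable {Ω : Type*} [MeasurableSpace Ω] {μ : Measure Ω}

lemma integrable_exp_neg_mul [IsFiniteMeasure μ] {I : Ω → ℝ} (hI : Measurable I)
    (hI0 : ∀ ω, 0 ≤ I ω) {s : ℝ} (hs : 0 ≤ s) : Integrable (fun ω => exp (-(s * I ω))) μ := by
  refine (integrable_const (1 : ℝ)).mono' (hI.const_mul s).neg.exp.aestronglyMeasurable ?_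
  exact Eventually.of_forall fun ω => by
    simpa [abs_of_nonneg (exp_nonneg _)] using mul_nonneg hs (hI0 ω)

lemma IndepFun.measureReal_le_eq_integral_cdf [IsProbabilityMeasure μ] {X T : Ω → ℝ}
    (hX : AEMeasurable X μ) (hT : Measurable T) (hTX : IndepFun T X μ) :
    μ.real {ω | X ω ≤ T ω} = ∫ ω, cdf (μ.map X) (T ω) ∂μ := by
  have : IsProbabilityMeasure (μ.map X) := Measure.isProbabilityMeasure_map hX
  have hE : MeasurableSet {p : ℝ × ℝ | p.2 ≤ p.1} := measurableSet_le measurable_snd measurable_fst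
  have hprod : μ.map (fun ω => (T ω, X ω)) = (μ.map T).prod (μ.map X) :=
    (indepFun_iff_map_prod_eq_prod_map_map hT.aemeasurable hX).1 hTX
  have hcdf : Measurable (cdf (μ.map X)) := (cdf _).mono.measurable
  have hlint : μ {ω | X ω ≤ T ω} = ∫⁻ ω, ENNReal.ofReal (cdf (μ.map X) (T ω)) ∂μ :=
    calc μ {ω | X ω ≤ T ω} = μ.map (fun ω => (T ω, X ω)) {p | p.2 ≤ p.1} :=
          (Measure.map_apply_of_aemeasurable (hT.aemeasurable.prodMk hX) hE).symm
      _ = ∫⁻ t, μ.map X (Iic t) ∂(μ.map T) := by rw [hprod, Measure.prod_apply hE]; rfl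
      _ = ∫⁻ ω, ENNReal.ofReal (cdf (μ.map X) (T ω)) ∂μ := by
          simp_rw [← ofReal_cdf]
          exact lintegral_map hcdf.ennreal_ofReal hT
  rw [measureReal_def, hlint, ← ofReal_integral_eq_lintegral_ofReal, ENNReal.toReal_ofReal]
  · exact integral_nonneg fun ω => cdf_nonneg _ _
  · refine (integrable_const (1 : ℝ)).mono' (hcdf.comp hT).aestronglyMeasurable ?_
    exact Eventually.of_forall fun ω => by
      simpa [abs_of_nonneg (cdf_nonneg _ _)] using cdf_le_one _ _
  · exact Eventually.of_forall fun ω => cdf_nonneg _ _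

lemma IndepFun.measureReal_le_eq_one_sub_integral_exp [IsProbabilityMeasure μ]
    {X T : Ω → ℝ} {r : ℝ} (hr : 0 < r) (hX : μ.map X = expMeasure r) (hT : Measurable T)
    (hT0 : ∀ ω, 0 ≤ T ω) (hTX : IndepFun T X μ) :
    μ.real {ω | X ω ≤ T ω} = 1 - ∫ ω, exp (-(r * T ω)) ∂μ := by
  have hXm : AEMeasurable X μ :=
    .of_map_ne_zero (by simp [hX, (isProbabilityMeasure_expMeasure hr).ne_zero])
  calc μ.real {ω | X ω ≤ T ω} = ∫ ω, cdf (expMeasure r) (T ω) ∂μ := by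
        rw [hTX.measureReal_le_eq_integral_cdf hXm hT, hX]
    _ = ∫ ω, (1 - exp (-(r * T ω))) ∂μ := by simp_rw [cdf_expMeasure_eq hr, if_pos (hT0 _)]
    _ = 1 - ∫ ω, exp (-(r * T ω)) ∂μ := by
        rw [integral_sub (integrable_const 1) (integrable_exp_neg_mul hT hT0 hr.le)]
        simp

lemma IndepFun.integral_exp_neg_add {U V : Ω → ℝ} (h : IndepFun U V μ)
    (hU : AEMeasurable U μ) (hV : AEMeasurable V μ) (a b : ℝ) :
    ∫ ω, exp (-(a * U ω + b * V ω)) ∂μ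
      = (∫ ω, exp (-(a * U ω)) ∂μ) * ∫ ω, exp (-(b * V ω)) ∂μ := by
  have hexp : ∀ c : ℝ, Measurable fun x : ℝ => exp (-(c * x)) := fun c => by fun_prop
  simp_rw [neg_add, exp_add]
  exact (h.comp (hexp a) (hexp b)).integral_mul_eq_mul_integral
    ((hexp a).comp_aemeasurable hU).aestronglyMeasurable
    ((hexp b).comp_aemeasurable hV).aestronglyMeasurable

lemma iIndepFun.indepFun_mul_add_mul {ι : Type*} {f : ι → Ω → ℝ}
    (h : iIndepFun f μ) (hf : ∀ i, AEMeasurable (f i) μ) {i j k : ι} (hik : i ≠ k) (hjk : j ≠ k)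
    (a b : ℝ) : IndepFun (fun ω => a * f i ω + b * f j ω) (f k) μ :=
  (h.indepFun_prodMk₀ hf i j k hik hjk).comp
    (φ := fun p : ℝ × ℝ => a * p.1 + b * p.2) (by fun_prop) measurable_id

lemma measure_eq_zero_of_tendsto_integral_exp_neg [IsFiniteMeasure μ] {I : Ω → ℝ}
    (hI : Measurable I) (hI0 : ∀ ω, 0 ≤ I ω)
    (hL : Tendsto (fun s => ∫ ω, exp (-(s * I ω)) ∂μ) atTop (𝓝 0)) :
    μ {ω | I ω = 0} = 0 := by
  have hS : MeasurableSet {ω | I ω = 0} := hI (measurableSet_singleton 0)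
  have hbound : ∀ s, 0 ≤ s → μ.real {ω | I ω = 0} ≤ ∫ ω, exp (-(s * I ω)) ∂μ := fun s hs =>
    calc μ.real {ω | I ω = 0} = ∫ ω in {ω | I ω = 0}, (1 : ℝ) ∂μ := by simp
      _ = ∫ ω in {ω | I ω = 0}, exp (-(s * I ω)) ∂μ :=
          setIntegral_congr_fun hS fun ω (hω : I ω = 0) => by simp [hω]
      _ ≤ ∫ ω, exp (-(s * I ω)) ∂μ :=
          setIntegral_le_integral (integrable_exp_neg_mul hI hI0 hs)
            (Eventually.of_forall fun ω => exp_nonneg _)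
  have := ge_of_tendsto hL ((eventually_ge_atTop 0).mono hbound)
  rw [← measureReal_eq_zero_iff]
  exact le_antisymm this measureReal_nonneg

end ProbabilityTheory

lemma tendsto_exp_neg_mul_rpow_atTop {κ δ : ℝ} (hκ : 0 < κ) (hδ : 0 < δ) :
    Tendsto (fun s : ℝ => exp (-(κ * s ^ δ))) atTop (𝓝 0) :=
  tendsto_exp_atBot.comp <| tendsto_neg_atTop_atBot.comp <|
    (tendsto_rpow_atTop hδ).const_mul_atTop hκ

lemma two_mul_pi_sq_mul_inv_sin_div_pos {α : ℝ} (hα : 2 < α) :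
    0 < 2 * π ^ 2 * (sin (2 * π / α))⁻¹ / α := by
  have hα0 : 0 < α := by linarith
  have : 0 < sin (2 * π / α) :=
    sin_pos_of_pos_of_lt_pi (by positivity) (by rw [div_lt_iff₀ hα0]; nlinarith [pi_pos])
  positivity

lemma sir_le_iff {Pp Ps dp α β x u v : ℝ} (hPp : 0 < Pp) (hdp : 0 < dp)
    (hD : 0 < Pp * u + Ps * v) :
    Pp * dp ^ (-α) * x / (Pp * u + Ps * v) ≤ β
      ↔ x ≤ β * dp ^ α * u + β * dp ^ α * Ps / Pp * v := by
  have hdpα : 0 < dp ^ α := rpow_pos_of_pos hdp α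
  have hscale : Pp * (dp ^ α)⁻¹ * (β * dp ^ α * u + β * dp ^ α * Ps / Pp * v)
      = β * (Pp * u + Ps * v) := by
    field_simp
  rw [div_le_iff₀ hD, rpow_neg hdp.le, ← hscale, mul_le_mul_iff_of_pos_left (by positivity)]

lemma mul_rpow_mul_rpow_div {c d : ℝ} (hc : 0 ≤ c) (hd : 0 ≤ d) {α : ℝ} (hα : α ≠ 0) (p : ℝ) :
    (c * d ^ α) ^ (p / α) = c ^ (p / α) * d ^ p := by
  rw [mul_rpow hc (rpow_nonneg hd α), ← rpow_mul hd, mul_div_cancel₀ p hα]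

theorem exact_primary_outage_general
    {Ω : Type*} [MeasurableSpace Ω] (μ : Measure Ω) [IsProbabilityMeasure μ]
    (X Ipp Isp : Ω → ℝ)
    (hX : Measure.map X μ = expMeasure 1)
    (hIpp : Measurable Ipp) (hIsp : Measurable Isp)
    (hIppNonneg : ∀ ω, 0 ≤ Ipp ω) (hIspNonneg : ∀ ω, 0 ≤ Isp ω)
    (hindep : iIndepFun ![X, Ipp, Isp] μ)
    (α lamp lams dp Pp Ps betap : ℝ)
    (hα : 2 < α) (hlamp : 0 < lamp) (hdp : 0 < dp)
    (hPp : 0 < Pp) (hPs : 0 < Ps) (hbetap : 0 < betap)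
    (c₁ : ℝ) (hc₁ : c₁ = 2 * π ^ 2 * (Real.sin (2 * π / α))⁻¹ / α)
    (hLpp : ∀ s : ℝ, 0 < s →
      ∫ ω, Real.exp (-(s * Ipp ω)) ∂μ = Real.exp (-(lamp * c₁ * s ^ (2 / α))))
    (hLsp : ∀ s : ℝ, 0 < s →
      ∫ ω, Real.exp (-(s * Isp ω)) ∂μ = Real.exp (-(lams * c₁ * s ^ (2 / α)))) :
    (μ {ω | Pp * dp ^ (-α) * X ω / (Pp * Ipp ω + Ps * Isp ω) ≤ betap}).toReal
      = 1 - Real.exp (-(lamp * c₁ * betap ^ (2 / α) * dp ^ 2))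
          * Real.exp (-(lams * c₁ * dp ^ 2 * (Ps * betap / Pp) ^ (2 / α))) := by
  have hα0 : 0 < α := by linarith
  have hc₁pos : 0 < c₁ := hc₁ ▸ two_mul_pi_sq_mul_inv_sin_div_pos hα
  have hIpp0 : μ {ω | Ipp ω = 0} = 0 :=
    measure_eq_zero_of_tendsto_integral_exp_neg hIpp hIppNonneg <|
      (tendsto_exp_neg_mul_rpow_atTop (by positivity) (by positivity)).congr'
        (EventuallyEq.symm ((eventually_gt_atTop 0).mono hLpp))
  set a := betap * dp ^ α
  set b := betap * dp ^ α * Ps / Pp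
  have hevent : {ω | Pp * dp ^ (-α) * X ω / (Pp * Ipp ω + Ps * Isp ω) ≤ betap}
      =ᵐ[μ] {ω | X ω ≤ a * Ipp ω + b * Isp ω} := by
    refine (measure_eq_zero_iff_ae_notMem.1 hIpp0).mono fun ω (hω : Ipp ω ≠ 0) => propext ?_
    exact sir_le_iff hPp hdp <| add_pos_of_pos_of_nonneg
      (mul_pos hPp ((hIppNonneg ω).lt_of_ne' hω)) (mul_nonneg hPs.le (hIspNonneg ω))
  have hmeas : ∀ i, AEMeasurable (![X, Ipp, Isp] i) μ := by
    intro i; fin_cases i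
    exacts [.of_map_ne_zero (by simp [hX, (isProbabilityMeasure_expMeasure one_pos).ne_zero]),
      hIpp.aemeasurable, hIsp.aemeasurable]
  have hT0 : ∀ ω, 0 ≤ a * Ipp ω + b * Isp ω := fun ω => by
    have := hIppNonneg ω; have := hIspNonneg ω; positivity
  have hindepTX : IndepFun (fun ω => a * Ipp ω + b * Isp ω) X μ :=
    hindep.indepFun_mul_add_mul hmeas (i := 1) (j := 2) (k := 0) (by decide) (by decide) a b
  have hIppIsp : IndepFun Ipp Isp μ := hindep.indepFun (show (1 : Fin 3) ≠ 2 by decide)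
  rw [← measureReal_def, measureReal_congr hevent,
    hindepTX.measureReal_le_eq_one_sub_integral_exp one_pos hX (by fun_prop) hT0]
  simp_rw [one_mul]
  rw [hIppIsp.integral_exp_neg_add hIpp.aemeasurable hIsp.aemeasurable,
    hLpp a (by positivity), hLsp b (by positivity),
    show b = Ps * betap / Pp * dp ^ α by ring, mul_rpow_mul_rpow_div hbetap.le hdp.le hα0.ne',
    mul_rpow_mul_rpow_div (by positivity) hdp.le hα0.ne', rpow_two]
  ring_nf

/-- Exact primary outage probability of Theorem 1: if `I_pp` and `I_sp` are independent
nonnegative random variables with shot-noise Laplace transforms `exp(-λ_p c₁ s^{2/α})`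
and `exp(-λ_s c₁ s^{2/α})`, and `|h|² ~ Exp(1)` is independent of both, then the outage
probability is `1 - exp(-λ_p c₁ β_p^{2/α} d_p²) exp(-λ_s c₁ d_p² (P_s β_p/P_p)^{2/α})`. -/
theorem exact_primary_outage
    {Ω : Type*} [MeasurableSpace Ω] (μ : Measure Ω) [IsProbabilityMeasure μ]
    (X Ipp Isp : Ω → ℝ)
    (hX : Measure.map X μ = expMeasure 1)
    (hIpp : Measurable Ipp) (hIsp : Measurable Isp)
    (hIppNonneg : ∀ ω, 0 ≤ Ipp ω) (hIspNonneg : ∀ ω, 0 ≤ Isp ω)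
    (hindep : iIndepFun ![X, Ipp, Isp] μ)
    (α lamp lams dp Pp Ps betap : ℝ)
    (hα : 2 < α) (hlamp : 0 < lamp) (hlams : 0 < lams) (hdp : 0 < dp)
    (hPp : 0 < Pp) (hPs : 0 < Ps) (hbetap : 0 < betap)
    (c₁ : ℝ) (hc₁ : c₁ = 2 * π ^ 2 * (Real.sin (2 * π / α))⁻¹ / α)
    (hLpp : ∀ s : ℝ, 0 < s →
      ∫ ω, Real.exp (-(s * Ipp ω)) ∂μ = Real.exp (-(lamp * c₁ * s ^ (2 / α))))
    (hLsp : ∀ s : ℝ, 0 < s →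
      ∫ ω, Real.exp (-(s * Isp ω)) ∂μ = Real.exp (-(lams * c₁ * s ^ (2 / α)))) :
    (μ {ω | Pp * dp ^ (-α) * X ω / (Pp * Ipp ω + Ps * Isp ω) ≤ betap}).toReal
      = 1 - Real.exp (-(lamp * c₁ * betap ^ (2 / α) * dp ^ 2))
          * Real.exp (-(lams * c₁ * dp ^ 2 * (Ps * betap / Pp) ^ (2 / α))) :=
  exact_primary_outage_general μ X Ipp Isp hX hIpp hIsp hIppNonneg hIspNonneg hindep α lamp lams dp
    Pp Ps betap hα hlamp hdp hPp hPs hbetap c₁ hc₁ hLpp hLsp
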